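/- (Monotonicity) Fix an instruction field I and an odometer h. If V ⊆ Ṽ ⊆ ℤ^d and η ≤ η̃ pointwise (in the order of ℕ_𝔰 where 0 < 𝔰 < 1 < 2 < ⋯), then m_{V,η,h}(x) ≤ m_{Ṽ,η̃,h}(x) for every x ∈ ℤ^d. -/

import Mathlib

open scoped ENNReal NNReal
open MeasureTheory

namespace ARW

/-- A site of the lattice `ℤ^d`. -/
abbrev Site (d : ℕ) := Fin d → ℤ

/-- The set `ℕ_𝔰 = ℕ ∪ {𝔰}` of possible values at a site. -/
inductive NS where
  | nat : ℕ → NS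
  | s : NS
deriving DecidableEq

/-- Rank function realizing the total order `0 < 𝔰 < 1 < 2 < ⋯`
(`𝔰` is placed at `1/2`). -/
def NS.val : NS → ℚ
  | .nat n => n
  | .s => 1/2

instance : LE NS := ⟨fun a b => a.val ≤ b.val⟩
instance : LT NS := ⟨fun a b => a.val < b.val⟩

/-- Remove one particle: `n − 1`, with `𝔰 − 1 = 0`. -/
def NS.dec : NS → NS
  | .nat 0 => .nat 0
  | .nat (n+1) => .nat n
  | .s => .nat 0

/-- Add one particle: `n + 1`, with `𝔰 + 1 = 2`. -/
def NS.inc : NS → NS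
  | .nat n => .nat (n+1)
  | .s => .nat 2

/-- Multiplication by `𝔰`: `n·𝔰 = n` for `n ≥ 2`, `1·𝔰 = 𝔰`, `𝔰·𝔰 = 𝔰`. -/
def NS.mulS : NS → NS
  | .nat 0 => .nat 0
  | .nat 1 => .s
  | .nat (n+2) => .nat (n+2)
  | .s => .s

/-- A configuration of the ARW. -/
abbrev Config (d : ℕ) := Site d → NS

/-- An odometer. -/
abbrev Odom (d : ℕ) := Site d → ℕ

/-- An instruction: either a sleep instruction `τ_{x𝔰}`, or a move instruction
`τ_{xy}` recorded through the displacement `z = y − x ≠ 0`. -/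
inductive Instr (d : ℕ) where
  | sleep : Instr d
  | move : (z : Site d) → z ≠ 0 → Instr d

/-- Applying an instruction at site `x` to a configuration: `τ_{x𝔰}` replaces `η(x)` by
`η(x)·𝔰`; `τ_{xy}` (with `y = x + z`) decreases `η(x)` by one and increases `η(y)` by one. -/
def applyInstr {d : ℕ} (x : Site d) (ι : Instr d) (η : Config d) : Config d :=
  match ι with
  | .sleep => Function.update η x (η x).mulS
  | .move z _ => fun w =>
      if w = x then (η x).dec
      else if w = x + z then (η (x + z)).inc
      else η w

/-- A field of instructions `(τ^{x,j})_{x ∈ ℤ^d, j ∈ ℕ}`. -/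
abbrev InstrField (d : ℕ) := Site d → ℕ → Instr d

/-- Toppling site `x`: `Φ_x(η,h) = (τ^{x,h(x)+1} η, h + δ_x)`. -/
def topple {d : ℕ} (I : InstrField d) (x : Site d) (s : Config d × Odom d) :
    Config d × Odom d :=
  (applyInstr x (I x (s.2 x + 1)) s.1, Function.update s.2 x (s.2 x + 1))

/-- `Φ_α` for a finite sequence `α = (x_1, …, x_k)` of sites (`x_1` acts first). -/
def toppleSeq {d : ℕ} (I : InstrField d) :
    List (Site d) → Config d × Odom d → Config d × Odom d
  | [], s => s
  | x :: α, s => toppleSeq I α (topple I x s)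

/-- Site `x` is unstable for `η` if `η(x) ≥ 1`. -/
def Unstable {d : ℕ} (η : Config d) (x : Site d) : Prop := NS.nat 1 ≤ η x

/-- Toppling `x` is acceptable for `η` if `η(x) ≠ 0`. -/
def AcceptableAt {d : ℕ} (η : Config d) (x : Site d) : Prop := η x ≠ NS.nat 0

/-- `α` is a legal sequence of topplings for `(η,h)`: each successive toppling is legal. -/
inductive LegalSeq {d : ℕ} (I : InstrField d) : List (Site d) → Config d × Odom d → Prop
  | nil (s : Config d × Odom d) : LegalSeq I [] s
  | cons {x : Site d} {α : List (Site d)} {s : Config d × Odom d} :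
      Unstable s.1 x → LegalSeq I α (topple I x s) → LegalSeq I (x :: α) s

/-- `α` is an acceptable sequence of topplings for `(η,h)`. -/
inductive AcceptableSeq {d : ℕ} (I : InstrField d) : List (Site d) → Config d × Odom d → Prop
  | nil (s : Config d × Odom d) : AcceptableSeq I [] s
  | cons {x : Site d} {α : List (Site d)} {s : Config d × Odom d} :
      AcceptableAt s.1 x → AcceptableSeq I α (topple I x s) → AcceptableSeq I (x :: α) s

/-- `η` is stable in `V`: every `x ∈ V` is stable for `η`. -/
def StableIn {d : ℕ} (η : Config d) (V : Set (Site d)) : Prop :=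
  ∀ x ∈ V, ¬ Unstable η x

/-- `m_{V,η,h}(x) = sup { m_β(x) : β ⊆ V legal for (η,h) }`, as an element of `ℕ∞`. -/
noncomputable def mV {d : ℕ} (I : InstrField d) (V : Set (Site d)) (η : Config d) (h : Odom d)
    (x : Site d) : ℕ∞ :=
  ⨆ (β : List (Site d)) (_ : (∀ y ∈ β, y ∈ V) ∧ LegalSeq I β (η, h)), (β.count x : ℕ∞)

/-- `m_{η,h} = m_{ℤ^d,η,h}`. -/
noncomputable def mFull {d : ℕ} (I : InstrField d) (η : Config d) (h : Odom d) :
    Site d → ℕ∞ :=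
  mV I Set.univ η h

/-- The zero odometer. -/
def zeroOdom (d : ℕ) : Odom d := fun _ => 0

/-- `η` is `I`-stabilizable: `m_{η;I}(x) < ∞` for every `x`. -/
def Stabilizable {d : ℕ} (I : InstrField d) (η : Config d) : Prop :=
  ∀ x : Site d, mFull I η (zeroOdom d) x < ⊤

/-- `η` is `I`-explosive: `m_{η;I}(x) = ∞` for every `x`. -/
def Explosive {d : ℕ} (I : InstrField d) (η : Config d) : Prop :=
  ∀ x : Site d, mFull I η (zeroOdom d) x = ⊤

/-! Each instruction acts monotonically on configurations for the order `0 < 𝔰 < 1 < 2 < ⋯`,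
so a toppling sequence that is legal from `η` stays legal from any `η' ≥ η`. Enlarging `V`
and `η` therefore only enlarges the family of sequences over which `m_{V,η,h}(x)` is the
supremum. -/

instance : Preorder NS where
  le_refl _ := le_refl (α := ℚ) _
  le_trans _ _ _ := le_trans (α := ℚ)
  lt_iff_le_not_ge _ _ := lt_iff_le_not_ge (α := ℚ)

namespace NS

@[simp] lemma nat_le_nat {n m : ℕ} : nat n ≤ nat m ↔ n ≤ m :=
  Nat.cast_le (α := ℚ)

@[simp] lemma nat_le_s {n : ℕ} : nat n ≤ s ↔ n = 0 := by
  change (n : ℚ) ≤ 1 / 2 ↔ _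
  rcases n with _ | n
  · norm_num
  · simp only [Nat.cast_succ, n.succ_ne_zero, iff_false, not_le]
    linarith [n.cast_nonneg (α := ℚ)]

@[simp] lemma s_le_nat {m : ℕ} : s ≤ nat m ↔ 1 ≤ m := by
  change (1 / 2 : ℚ) ≤ m ↔ _
  rcases m with _ | m
  · norm_num
  · simp only [Nat.cast_succ, le_add_iff_nonneg_left, zero_le, iff_true]
    linarith [m.cast_nonneg (α := ℚ)]

lemma dec_mono : Monotone dec := by
  rintro ((_ | n) | _) ((_ | m) | _) hab <;> simp_all [dec]

lemma inc_mono : Monotone inc := by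
  rintro (n | _) (m | _) hab <;> simp_all [inc]

lemma mulS_mono : Monotone mulS := by
  rintro ((_ | _ | n) | _) ((_ | _ | m) | _) hab <;> simp_all [mulS]

end NS

lemma applyInstr_mono {d : ℕ} (x : Site d) (ι : Instr d) : Monotone (applyInstr x ι) := by
  intro η η' hη w
  cases ι with
  | sleep =>
    rcases eq_or_ne w x with rfl | hw
    · simpa [applyInstr] using NS.mulS_mono (hη w)
    · simpa [applyInstr, hw] using hη w
  | move z _ =>
    simp only [applyInstr]
    split_ifs
    · exact NS.dec_mono (hη x)
    · exact NS.inc_mono (hη (x + z))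
    · exact hη w

lemma LegalSeq.mono_config {d : ℕ} {I : InstrField d} {α : List (Site d)}
    {s : Config d × Odom d} (hα : LegalSeq I α s) {η' : Config d} (hη : s.1 ≤ η') :
    LegalSeq I α (η', s.2) := by
  induction hα generalizing η' with
  | nil => exact .nil _
  | cons hx _ ih => exact .cons (le_trans hx (hη _)) (ih (applyInstr_mono _ _ hη))

/-- **Monotonicity**: if `V ⊆ Ṽ` and `η ≤ η̃` pointwise, then `m_{V,η,h} ≤ m_{Ṽ,η̃,h}`. -/
theorem mV_monotone {d : ℕ} (I : InstrField d) (h : Odom d)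
    (V V' : Set (Site d)) (hV : V ⊆ V')
    (η η' : Config d) (hη : ∀ x : Site d, η x ≤ η' x) :
    ∀ x : Site d, mV I V η h x ≤ mV I V' η' h x := fun _ =>
  biSup_mono fun _ ⟨hβV, hβ⟩ => ⟨fun y hy => hV (hβV y hy), hβ.mono_config hη⟩

end ARW
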